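/- For each natural number d, the number of Fibonacci indexes of degree d equals the Fibonacci number F_{d+1}, where F_1 = F_2 = 1 and F_{n+2} = F_{n+1} + F_n (this count justifies the name 'Fibonacci index'). -/
import Mathlib


/-- The two-letter alphabet. -/
inductive Letter : Type
  | C : Letter
  | D : Letter
deriving DecidableEq, Repr

open Letter

/-- The block `D^i C^j` corresponding to a pair `(i, j)`. -/
def block (p : ℕ × ℕ) : List Letter :=
  List.replicate p.1 D ++ List.replicate p.2 C

/-- A Fibonacci index is a nonempty list `k : List (ℕ × ℕ)`; the word `(C,D)^k`
is `D^{i_0}C^{j_0} ++ [C,D] ++ … ++ [C,D] ++ D^{i_r}C^{j_r}`. -/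
def cdWord (k : List (ℕ × ℕ)) : List Letter :=
  List.intercalate [C, D] (k.map block)

/-- The degree `2·Σ i_n + Σ j_n + 3r` of a Fibonacci index of order `r + 1`. -/
def degree (k : List (ℕ × ℕ)) : ℕ :=
  2 * (k.map Prod.fst).sum + (k.map Prod.snd).sum + 3 * (k.length - 1)

namespace FibIndexAux

/-- Increment the first coordinate of the head. -/
def Fm : List (ℕ × ℕ) → List (ℕ × ℕ)
  | [] => []
  | (i, j) :: t => (i + 1, j) :: t

/-- Increment the second coordinate of the head. -/
def Hm : List (ℕ × ℕ) → List (ℕ × ℕ)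
  | [] => []
  | (i, j) :: t => (i, j + 1) :: t

/-- All Fibonacci indexes of degree `d`. -/
def S (d : ℕ) : Set (List (ℕ × ℕ)) := {k | k ≠ [] ∧ degree k = d}

/-- Fibonacci indexes of degree `d` whose head has first coordinate `0`. -/
def T (d : ℕ) : Set (List (ℕ × ℕ)) := {k | (∃ j t, k = (0, j) :: t) ∧ degree k = d}

lemma degree_cons (i j : ℕ) (t : List (ℕ × ℕ)) :
    degree ((i, j) :: t) =
      2 * i + j + 2 * (t.map Prod.fst).sum + (t.map Prod.snd).sum + 3 * t.length := by
  simp [degree]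
  omega

lemma degree_cons_cons (i j : ℕ) (q : ℕ × ℕ) (t : List (ℕ × ℕ)) :
    degree ((i, j) :: q :: t) = 2 * i + j + 3 + degree (q :: t) := by
  obtain ⟨a, b⟩ := q
  simp [degree_cons]
  omega

lemma Fm_inj : Function.Injective Fm := by
  intro a b h
  match a, b with
  | [], [] => rfl
  | [], (i, j) :: t => simp [Fm] at h
  | (i, j) :: t, [] => simp [Fm] at h
  | (i, j) :: t, (i', j') :: t' =>
      simp only [Fm, List.cons.injEq, Prod.mk.injEq] at h
      simp [h.1.1, h.1.2, h.2]
      omega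

lemma Hm_inj : Function.Injective Hm := by
  intro a b h
  match a, b with
  | [], [] => rfl
  | [], (i, j) :: t => simp [Hm] at h
  | (i, j) :: t, [] => simp [Hm] at h
  | (i, j) :: t, (i', j') :: t' =>
      simp only [Hm, List.cons.injEq, Prod.mk.injEq] at h
      simp [h.1.1, h.1.2, h.2]
      omega

lemma cons00_inj : Function.Injective (List.cons ((0 : ℕ), (0 : ℕ))) := by
  intro a b h
  simpa using h

lemma S0 : S 0 = {[((0 : ℕ), (0 : ℕ))]} := by
  ext k
  match k with
  | [] => simp [S]
  | (i, j) :: t =>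
      simp only [S, Set.mem_setOf_eq, ne_eq, reduceCtorEq, not_false_eq_true, true_and,
        Set.mem_singleton_iff, List.cons.injEq, Prod.mk.injEq, degree_cons]
      constructor
      · intro h
        have ht : t.length = 0 := by omega
        have ht' : t = [] := List.length_eq_zero_iff.mp ht
        subst ht'
        simp at h ⊢
        omega
      · rintro ⟨⟨rfl, rfl⟩, rfl⟩
        simp

lemma S1 : S 1 = {[((0 : ℕ), (1 : ℕ))]} := by
  ext k
  match k with
  | [] => simp [S]
  | (i, j) :: t =>
      simp only [S, Set.mem_setOf_eq, ne_eq, reduceCtorEq, not_false_eq_true, true_and,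
        Set.mem_singleton_iff, List.cons.injEq, Prod.mk.injEq, degree_cons]
      constructor
      · intro h
        have ht : t.length = 0 := by omega
        have ht' : t = [] := List.length_eq_zero_iff.mp ht
        subst ht'
        simp at h ⊢
        omega
      · rintro ⟨⟨rfl, rfl⟩, rfl⟩
        simp

lemma S2 : S 2 = {[((1 : ℕ), (0 : ℕ))], [((0 : ℕ), (2 : ℕ))]} := by
  ext k
  match k with
  | [] => simp [S]
  | (i, j) :: t =>
      simp only [S, Set.mem_setOf_eq, ne_eq, reduceCtorEq, not_false_eq_true, true_and,
        Set.mem_insert_iff, Set.mem_singleton_iff, List.cons.injEq, Prod.mk.injEq, degree_cons]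
      constructor
      · intro h
        have ht : t.length = 0 := by omega
        have ht' : t = [] := List.length_eq_zero_iff.mp ht
        subst ht'
        simp at h ⊢
        omega
      · rintro (⟨⟨rfl, rfl⟩, rfl⟩ | ⟨⟨rfl, rfl⟩, rfl⟩) <;> simp

lemma T0 : T 0 = {[((0 : ℕ), (0 : ℕ))]} := by
  ext k
  constructor
  · rintro ⟨⟨j, t, rfl⟩, hdeg⟩
    rw [degree_cons] at hdeg
    have ht : t.length = 0 := by omega
    have ht' : t = [] := List.length_eq_zero_iff.mp ht
    subst ht'
    simp at hdeg ⊢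
    omega
  · rintro rfl
    exact ⟨⟨0, [], rfl⟩, by simp [degree]⟩

lemma T1 : T 1 = {[((0 : ℕ), (1 : ℕ))]} := by
  ext k
  constructor
  · rintro ⟨⟨j, t, rfl⟩, hdeg⟩
    rw [degree_cons] at hdeg
    have ht : t.length = 0 := by omega
    have ht' : t = [] := List.length_eq_zero_iff.mp ht
    subst ht'
    simp at hdeg ⊢
    omega
  · rintro rfl
    exact ⟨⟨1, [], rfl⟩, by simp [degree]⟩

lemma T2 : T 2 = {[((0 : ℕ), (2 : ℕ))]} := by
  ext k
  constructor
  · rintro ⟨⟨j, t, rfl⟩, hdeg⟩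
    rw [degree_cons] at hdeg
    have ht : t.length = 0 := by omega
    have ht' : t = [] := List.length_eq_zero_iff.mp ht
    subst ht'
    simp at hdeg ⊢
    omega
  · rintro rfl
    exact ⟨⟨2, [], rfl⟩, by simp [degree]⟩

lemma T_succ (n : ℕ) :
    T (n + 3) = Hm '' T (n + 2) ∪ (List.cons ((0 : ℕ), (0 : ℕ))) '' S n := by
  ext k
  constructor
  · rintro ⟨⟨j, t, rfl⟩, hdeg⟩
    match j with
    | j + 1 =>
        left
        refine ⟨(0, j) :: t, ⟨⟨j, t, rfl⟩, ?_⟩, rfl⟩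
        rw [degree_cons] at hdeg ⊢
        omega
    | 0 =>
        right
        have ht : t ≠ [] := by
          rintro rfl
          simp [degree] at hdeg
        match t with
        | q :: t' =>
            refine ⟨q :: t', ⟨by simp, ?_⟩, rfl⟩
            rw [degree_cons_cons] at hdeg
            omega
  · rintro (⟨a, ⟨⟨j, t, rfl⟩, hdeg⟩, rfl⟩ | ⟨a, ⟨hne, hdeg⟩, rfl⟩)
    · refine ⟨⟨j + 1, t, rfl⟩, ?_⟩
      rw [degree_cons] at hdeg
      rw [show Hm ((0, j) :: t) = ((0 : ℕ), j + 1) :: t from rfl, degree_cons]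
      omega
    · refine ⟨⟨0, a, rfl⟩, ?_⟩
      match a with
      | [] => exact absurd rfl hne
      | q :: t' =>
          rw [degree_cons_cons]
          omega

lemma S_succ (n : ℕ) :
    S (n + 3) = Fm '' S (n + 1) ∪ T (n + 3) := by
  ext k
  constructor
  · rintro ⟨hne, hdeg⟩
    match k with
    | [] => exact absurd rfl hne
    | (i, j) :: t =>
        match i with
        | i + 1 =>
            left
            refine ⟨(i, j) :: t, ⟨by simp, ?_⟩, rfl⟩
            rw [degree_cons] at hdeg ⊢
            omega
        | 0 => exact Or.inr ⟨⟨j, t, rfl⟩, hdeg⟩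
  · rintro (⟨a, ⟨hne, hdeg⟩, rfl⟩ | ⟨⟨j, t, rfl⟩, hdeg⟩)
    · match a with
      | [] => exact absurd rfl hne
      | (i, j) :: t =>
          refine ⟨by simp [Fm], ?_⟩
          rw [degree_cons] at hdeg
          rw [show Fm ((i, j) :: t) = (i + 1, j) :: t from rfl, degree_cons]
          omega
    · exact ⟨by simp, hdeg⟩

lemma disj_Fm_T (m d : ℕ) : Disjoint (Fm '' S m) (T d) := by
  rw [Set.disjoint_left]
  rintro k ⟨a, ⟨hne, _⟩, rfl⟩ ⟨⟨j, t, hk⟩, _⟩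
  match a with
  | [] => exact absurd rfl hne
  | (i, j') :: t' => simp [Fm] at hk

lemma disj_Hm_cons (m d : ℕ) :
    Disjoint (Hm '' T m) ((List.cons ((0 : ℕ), (0 : ℕ))) '' S d) := by
  rw [Set.disjoint_left]
  rintro k ⟨a, ⟨⟨j, t, rfl⟩, _⟩, rfl⟩ ⟨b, _, hk⟩
  simp [Hm, Prod.ext_iff] at hk

lemma tc_spec : ∀ d, (S d).Finite ∧ (T d).Finite ∧
    (S d).ncard = Nat.fib (d + 1) ∧
    (T d).ncard = (if d = 0 then 1 else Nat.fib d) := by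
  intro d
  induction d using Nat.strong_induction_on with
  | _ d ih =>
    match d with
    | 0 =>
        rw [S0, T0]
        simp
    | 1 =>
        rw [S1, T1]
        simp
    | 2 =>
        rw [S2, T2]
        refine ⟨(Set.finite_singleton _).insert _, Set.finite_singleton _, ?_, by simp⟩
        rw [Set.ncard_pair (by simp)]
        decide
    | n + 3 =>
        obtain ⟨hSf, hTf, hS, hT⟩ := ih n (by omega)
        obtain ⟨hSf1, _, hS1, _⟩ := ih (n + 1) (by omega)
        obtain ⟨_, hTf2, _, hT2⟩ := ih (n + 2) (by omega)
        have hTeq := T_succ n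
        have hSeq := S_succ n
        have hTfin : (T (n + 3)).Finite := by
          rw [hTeq]
          exact (hTf2.image _).union (hSf.image _)
        have hSfin : (S (n + 3)).Finite := by
          rw [hSeq]
          exact (hSf1.image _).union hTfin
        have hTcard : (T (n + 3)).ncard = Nat.fib (n + 3) := by
          rw [hTeq, Set.ncard_union_eq (disj_Hm_cons _ _) (hTf2.image _) (hSf.image _),
            Set.ncard_image_of_injective _ Hm_inj, Set.ncard_image_of_injective _ cons00_inj,
            hT2, hS]
          have h2 := Nat.fib_add_two (n := n + 1)
          simp only [show n + 1 + 2 = n + 3 from by omega, show n + 1 + 1 = n + 2 from rfl] at h2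
          simp only [Nat.add_eq_zero, if_neg (show ¬ (n = 0 ∧ (2:ℕ) = 0) by omega),
            show n + 1 + 1 = n + 2 from rfl, show n + 2 + 1 = n + 3 from rfl]
          omega
        refine ⟨hSfin, hTfin, ?_, by simpa using hTcard⟩
        rw [hSeq, Set.ncard_union_eq (disj_Fm_T _ _) (hSf1.image _) hTfin,
          Set.ncard_image_of_injective _ Fm_inj, hS1, hTcard]
        have h1 := Nat.fib_add_two (n := n + 2)
        have h2 := Nat.fib_add_two (n := n + 1)
        simp only [show n + 2 + 2 = n + 4 from by omega, show n + 1 + 2 = n + 3 from by omega,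
          show n + 1 + 1 = n + 2 from by omega, show n + 3 + 1 = n + 4 from by omega] at *
        omega

end FibIndexAux

/-- The number of Fibonacci indexes of degree `d` is the Fibonacci number
`F_{d+1}` (with `F_1 = F_2 = 1`); in Mathlib's convention this is
`Nat.fib (d + 1)`. -/
theorem card_fibIndex_of_degree (d : ℕ) :
    {k : List (ℕ × ℕ) | k ≠ [] ∧ degree k = d}.ncard = Nat.fib (d + 1) := by
  exact (FibIndexAux.tc_spec d).2.2.1
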